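/- arXiv:2403.08190 — 4 statements merged into one kernel-verified Lean document; each statement's English description precedes it below -/
import Mathlib

section
/- Let π : E ⥤ B be a functor between categories and f : e ⟶ e' a morphism of E. Then f is strongly cocartesian if and only if for every object m : x ⟶ y of the arrow category Arrow E and every morphism α : k_π.obj f ⟶ k_π.obj m in Comma π (𝟭 B), there exists a unique morphism β : f ⟶ m in Arrow E with k_π.map β = α. -/
open CategoryTheory

universe v₁ v₂ u₁ u₂

variable {E : Type u₁} {B : Type u₂} [Category.{v₁} E] [Category.{v₂} B]

/-- A morphism `f : e ⟶ e'` is *strongly cocartesian* for `π : E ⥤ B` if every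
`h : e ⟶ e''` together with a factorization `π.map h = π.map f ≫ v` of its image
admits a unique lift `g : e' ⟶ e''` with `π.map g = v` and `f ≫ g = h`. -/
def StronglyCocartesian (π : E ⥤ B) {e e' : E} (f : e ⟶ e') : Prop :=
  ∀ {e'' : E} (h : e ⟶ e'') (v : π.obj e' ⟶ π.obj e''),
    π.map h = π.map f ≫ v → ∃! g : e' ⟶ e'', π.map g = v ∧ f ≫ g = h

/-- The canonical functor `k_π : Arrow E ⥤ Comma π (𝟭 B)` sending `f : e ⟶ e'`
to `(e, π.obj e', π.map f)`. -/
@[simps]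
def kFunctor (π : E ⥤ B) : Arrow E ⥤ Comma π (𝟭 B) where
  obj f := { left := f.left, right := π.obj f.right, hom := π.map f.hom }
  map {f g} sq :=
    { left := sq.left
      right := π.map sq.right
      w := by
        dsimp
        rw [← π.map_comp, ← π.map_comp, Arrow.w] }

/-! A morphism `k_π f ⟶ k_π m` is a pair `(u, v)` with `π (u ≫ m) = π f ≫ v`, and its lifts along
`k_π` are exactly the `g` with `π g = v` and `f ≫ g = u ≫ m`: the lifting problem of strong
cocartesianness for `h := u ≫ m`. Conversely, every `h : e ⟶ e''` arises this way from the identity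
arrow `m := 𝟙 e''`. -/

namespace kFunctor

variable (π : E ⥤ B) {ℓ m : Arrow E}

lemma map_comp_hom_eq (a : (kFunctor π).obj ℓ ⟶ (kFunctor π).obj m) :
    π.map (a.left ≫ m.hom) = π.map ℓ.hom ≫ a.right :=
  (π.map_comp _ _).trans a.w

@[simps]
def homMk (u : ℓ.left ⟶ m.left) (v : π.obj ℓ.right ⟶ π.obj m.right)
    (w : π.map (u ≫ m.hom) = π.map ℓ.hom ≫ v) : (kFunctor π).obj ℓ ⟶ (kFunctor π).obj m where
  left := u
  right := v
  w := (π.map_comp _ _).symm.trans w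

variable {π} {u : ℓ.left ⟶ m.left} {v : π.obj ℓ.right ⟶ π.obj m.right}
  (w : π.map (u ≫ m.hom) = π.map ℓ.hom ≫ v)

def liftsEquiv :
    {β : ℓ ⟶ m // (kFunctor π).map β = homMk π u v w} ≃
      {g : ℓ.right ⟶ m.right // π.map g = v ∧ ℓ.hom ≫ g = u ≫ m.hom} where
  toFun β := ⟨β.1.right, congrArg CommaMorphism.right β.2,
    (Arrow.w β.1).symm.trans (congrArg (· ≫ m.hom) (congrArg CommaMorphism.left β.2))⟩
  invFun g := ⟨Arrow.homMk u g.1 g.2.2.symm, Comma.hom_ext _ _ rfl g.2.1⟩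
  left_inv β := Subtype.ext <| Arrow.hom_ext _ _ (congrArg CommaMorphism.left β.2).symm rfl
  right_inv _ := rfl

lemma existsUnique_map_eq_homMk_iff :
    (∃! β : ℓ ⟶ m, (kFunctor π).map β = homMk π u v w) ↔
      ∃! g : ℓ.right ⟶ m.right, π.map g = v ∧ ℓ.hom ≫ g = u ≫ m.hom :=
  (liftsEquiv w).existsUnique_subtype_congr

end kFunctor

/-- **Characterization of cocartesian arrows via the canonical functor to the comma
category.** A morphism `f` of `E` is strongly cocartesian iff every morphism
`k_π.obj f ⟶ k_π.obj m` of `Comma π (𝟭 B)` has a unique lift `f ⟶ m` in `Arrow E`. -/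
theorem stronglyCocartesian_iff_unique_lifts (π : E ⥤ B) {e e' : E} (f : e ⟶ e') :
    StronglyCocartesian π f ↔
      ∀ (m : Arrow E) (a : (kFunctor π).obj (Arrow.mk f) ⟶ (kFunctor π).obj m),
        ∃! β : Arrow.mk f ⟶ m, (kFunctor π).map β = a := by
  refine ⟨fun hf m a => ?_, fun H e'' h v hv => ?_⟩
  · have hw := kFunctor.map_comp_hom_eq π a
    exact (kFunctor.existsUnique_map_eq_homMk_iff hw).2 (hf _ _ hw)
  · have hw : π.map (h ≫ 𝟙 e'') = π.map f ≫ v := by rwa [Category.comp_id]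
    simpa using (kFunctor.existsUnique_map_eq_homMk_iff (m := Arrow.mk (𝟙 e'')) hw).1 (H _ _)
end

section
/- Let ξ : F ⥤ A and π : E ⥤ B be cloven Grothendieck opfibrations, and let α : A ⥤ B, φ : F ⥤ E be functors with φ ⋙ π = ξ ⋙ α. Then the pair (α, φ) is a cocartesian functor (φ maps strongly cocartesian morphisms of F to strongly cocartesian morphisms of E) if and only if for every e : F and every u : ξ.obj e ⟶ a, the unique comparison morphism c : (α.map u)_!(φ.obj e) ⟶ φ.obj (u_! e) lying over the identity and satisfying lift_π(φ.obj e, α.map u) ≫ c = φ.map (lift_ξ(e, u)) is an isomorphism. -/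
open CategoryTheory

universe v₁ v₂ v₃ v₄ u₁ u₂ u₃ u₄

section Defs

variable {E : Type u₁} {B : Type u₂} [Category.{v₁} E] [Category.{v₂} B]

/-- A *cleavage* for `π : E ⥤ B`: for every `e : E` and `u : π.obj e ⟶ b` a chosen
strongly cocartesian lift `map e u : e ⟶ obj e u` with `π.obj (obj e u) = b` and
`π.map (map e u) = u` (modulo `eqToHom`). `π` is a cloven Grothendieck opfibration
iff it admits such a cleavage. -/
structure Cleavage (π : E ⥤ B) where
  obj : ∀ {b : B} (e : E), (π.obj e ⟶ b) → E
  map : ∀ {b : B} (e : E) (u : π.obj e ⟶ b), e ⟶ obj e u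
  obj_proj : ∀ {b : B} (e : E) (u : π.obj e ⟶ b), π.obj (obj e u) = b
  map_proj : ∀ {b : B} (e : E) (u : π.obj e ⟶ b),
    π.map (map e u) = u ≫ eqToHom (obj_proj e u).symm
  cocart : ∀ {b : B} (e : E) (u : π.obj e ⟶ b), StronglyCocartesian π (map e u)

/-- A fibered functor `(α, φ)` from `ξ : F ⥤ A` to `π : E ⥤ B` is a *cocartesian
functor* if `φ` maps strongly cocartesian morphisms of `F` to strongly cocartesian
morphisms of `E`. -/
def CocartesianFunctor {F : Type u₃} {A : Type u₄} [Category.{v₃} F] [Category.{v₄} A]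
    (ξ : F ⥤ A) (π : E ⥤ B) (φ : F ⥤ E) : Prop :=
  ∀ {e e' : F} (m : e ⟶ e'), StronglyCocartesian ξ m → StronglyCocartesian π (φ.map m)

end Defs

/-! Two strongly cocartesian morphisms with the same domain and the same image in the base
differ by a vertical isomorphism, and strongly cocartesian morphisms are stable under
postcomposition with isomorphisms. So a strongly cocartesian `m` is a chosen lift `ℓ`
followed by an isomorphism, and `φ.map ℓ` is the chosen lift of `α.map (ξ.map m)` followed
by the comparison morphism. -/

namespace StronglyCocartesian

variable {E : Type u₁} {B : Type u₂} [Category.{v₁} E] [Category.{v₂} B] {π : E ⥤ B}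
  {e e' e'' : E} {f : e ⟶ e'}

lemma hom_ext (hf : StronglyCocartesian π f) {g₁ g₂ : e' ⟶ e''}
    (hπ : π.map g₁ = π.map g₂) (hcomp : f ≫ g₁ = f ≫ g₂) : g₁ = g₂ :=
  (hf (f ≫ g₁) (π.map g₁) (π.map_comp _ _)).unique ⟨rfl, rfl⟩ ⟨hπ.symm, hcomp.symm⟩

lemma comp_isIso (hf : StronglyCocartesian π f) (g : e' ⟶ e'') [IsIso g] :
    StronglyCocartesian π (f ≫ g) := by
  intro x h v hv
  obtain ⟨k, ⟨hk_proj, hk_comp⟩, hk_unique⟩ :=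
    hf h (π.map g ≫ v) (by rw [hv, π.map_comp, Category.assoc])
  refine ⟨inv g ≫ k, ⟨?_, by simp [hk_comp]⟩, fun y ⟨hy_proj, hy_comp⟩ => ?_⟩
  · simp [hk_proj]
  · rw [IsIso.eq_inv_comp]
    exact hk_unique (g ≫ y) ⟨by rw [π.map_comp, hy_proj], by rw [← Category.assoc, hy_comp]⟩

lemma isIso_of_comp_eq {e₁ : E} {f₁ : e ⟶ e₁} (hf : StronglyCocartesian π f)
    (hf₁ : StronglyCocartesian π f₁) (hobj : π.obj e' = π.obj e₁) (c : e' ⟶ e₁)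
    (hc : π.map c = eqToHom hobj) (hcomp : f ≫ c = f₁) : IsIso c := by
  obtain ⟨d, ⟨hd, hd_comp⟩, -⟩ := hf₁ f (eqToHom hobj.symm)
    (by simp [← hcomp, hc])
  refine ⟨d, hf.hom_ext ?_ ?_, hf₁.hom_ext ?_ ?_⟩
  · simp [hc, hd]
  · rw [← Category.assoc, hcomp, hd_comp, Category.comp_id]
  · simp [hc, hd]
  · rw [← Category.assoc, hd_comp, hcomp, Category.comp_id]

end StronglyCocartesian

namespace Cleavage

variable {E : Type u₁} {B : Type u₂} [Category.{v₁} E] [Category.{v₂} B] {π : E ⥤ B}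

lemma exists_isIso_map_comp_eq (cπ : Cleavage π) {e e' : E} {f : e ⟶ e'}
    (hf : StronglyCocartesian π f) : ∃ j, IsIso j ∧ cπ.map e (π.map f) ≫ j = f := by
  obtain ⟨j, ⟨hj, hj_comp⟩, -⟩ := cπ.cocart e (π.map f) f (eqToHom (cπ.obj_proj e _))
    (by simp [cπ.map_proj])
  exact ⟨j, StronglyCocartesian.isIso_of_comp_eq (cπ.cocart e _) hf _ j hj hj_comp, hj_comp⟩

end Cleavage

section Comparison

variable {F : Type u₁} {A : Type u₂} {E : Type u₃} {B : Type u₄}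
  [Category.{v₁} F] [Category.{v₂} A] [Category.{v₃} E] [Category.{v₄} B]
  {ξ : F ⥤ A} {π : E ⥤ B} {α : A ⥤ B} {φ : F ⥤ E}

lemma exists_comparison (cξ : Cleavage ξ) (cπ : Cleavage π) (heq : φ ⋙ π = ξ ⋙ α)
    {a : A} (e : F) (u : ξ.obj e ⟶ a) :
    ∃ c : cπ.obj (φ.obj e) (eqToHom (Functor.congr_obj heq e) ≫ α.map u) ⟶
        φ.obj (cξ.obj e u),
      π.map c =
          eqToHom ((cπ.obj_proj (φ.obj e)
              (eqToHom (Functor.congr_obj heq e) ≫ α.map u)).trans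
            ((Functor.congr_obj heq (cξ.obj e u)).trans
              (congrArg α.obj (cξ.obj_proj e u))).symm) ∧
        cπ.map (φ.obj e) (eqToHom (Functor.congr_obj heq e) ≫ α.map u) ≫ c =
          φ.map (cξ.map e u) := by
  have hproj := Functor.congr_hom heq (cξ.map e u)
  simp only [Functor.comp_map] at hproj
  refine (cπ.cocart _ _ (φ.map (cξ.map e u)) _ ?_).exists
  rw [hproj, cξ.map_proj, cπ.map_proj]
  simp [eqToHom_map]

end Comparison

/-- **Naturality of cocartesian functors.** Given cloven Grothendieck opfibrations
`ξ : F ⥤ A` and `π : E ⥤ B` and a fibered functor `(α, φ)` with `φ ⋙ π = ξ ⋙ α`,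
the pair `(α, φ)` is a cocartesian functor iff for every `e : F` and `u : ξ.obj e ⟶ a`
the unique comparison morphism `c : (α.map u)₍φ.obj e₎ ⟶ φ.obj (u₍e₎)` lying over the
identity and compatible with the chosen cocartesian lifts is an isomorphism. -/
theorem cocartesianFunctor_iff_comparison_isIso
    {F : Type u₁} {A : Type u₂} {E : Type u₃} {B : Type u₄}
    [Category.{v₁} F] [Category.{v₂} A] [Category.{v₃} E] [Category.{v₄} B]
    (ξ : F ⥤ A) (π : E ⥤ B) (α : A ⥤ B) (φ : F ⥤ E)
    (cξ : Cleavage ξ) (cπ : Cleavage π)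
    (heq : φ ⋙ π = ξ ⋙ α) :
    CocartesianFunctor ξ π φ ↔
      ∀ {a : A} (e : F) (u : ξ.obj e ⟶ a)
        (c : cπ.obj (φ.obj e) (eqToHom (Functor.congr_obj heq e) ≫ α.map u) ⟶
          φ.obj (cξ.obj e u)),
        π.map c =
          eqToHom ((cπ.obj_proj (φ.obj e)
              (eqToHom (Functor.congr_obj heq e) ≫ α.map u)).trans
            ((Functor.congr_obj heq (cξ.obj e u)).trans
              (congrArg α.obj (cξ.obj_proj e u))).symm) →
        cπ.map (φ.obj e) (eqToHom (Functor.congr_obj heq e) ≫ α.map u) ≫ c =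
          φ.map (cξ.map e u) →
        IsIso c := by
  constructor
  · intro hφ a e u c hc hcomp
    exact StronglyCocartesian.isIso_of_comp_eq (cπ.cocart _ _) (hφ _ (cξ.cocart e u)) _ c hc
      hcomp
  · intro hiso e e' m hm
    obtain ⟨j, hj, hm_eq⟩ := cξ.exists_isIso_map_comp_eq hm
    obtain ⟨c, hc, hcomp⟩ := exists_comparison cξ cπ heq e (ξ.map m)
    have : IsIso c := hiso e _ c hc hcomp
    rw [← hm_eq, φ.map_comp, ← hcomp]
    apply StronglyCocartesian.comp_isIso
    exact StronglyCocartesian.comp_isIso (cπ.cocart _ _) c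
end

section
/- Let ξ : F ⥤ A and π : E ⥤ B be cloven Grothendieck opfibrations, and let α : A ⥤ B, φ : F ⥤ E be functors with φ ⋙ π = ξ ⋙ α. Let χ_ξ ⊣ k_ξ and χ_π ⊣ k_π be left-adjoint-right-inverse adjunctions as in the Chevalley criterion (k_ξ : Arrow F ⥤ Comma ξ (𝟭 A) and k_π : Arrow E ⥤ Comma π (𝟭 B) the canonical functors, χ_ξ and χ_π left adjoints with invertible units). Let Arrow(φ) : Arrow F ⥤ Arrow E and Φ : Comma ξ (𝟭 A) ⥤ Comma π (𝟭 B) be the functors induced by (φ, α), which satisfy Arrow(φ) ⋙ k_π = k_ξ ⋙ Φ. Then (α, φ) is a cocartesian functor (φ maps strongly cocartesian morphisms to strongly cocartesian morphisms) if and only if the mate of this commutative square — the natural transformation with component at x : Comma ξ (𝟭 A) given by transposing, from χ_π.obj (Φ.obj x) to Arrow(φ).obj (χ_ξ.obj x), constructed from the unit of χ_ξ ⊣ k_ξ and the counit of χ_π ⊣ k_π — is a natural isomorphism. -/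
open CategoryTheory

universe v₁ v₂ v₃ v₄ u₁ u₂ u₃ u₄

section Defs

variable {E : Type u₁} {B : Type u₂} [Category.{v₁} E] [Category.{v₂} B]

variable {F : Type u₃} {A : Type u₄} [Category.{v₃} F] [Category.{v₄} A]

/-- The functor `Comma ξ (𝟭 A) ⥤ Comma π (𝟭 B)` induced by a fibered functor `(α, φ)`. -/
@[simps]
def commaMapFunctor (ξ : F ⥤ A) (π : E ⥤ B) (α : A ⥤ B) (φ : F ⥤ E)
    (heq : φ ⋙ π = ξ ⋙ α) : Comma ξ (𝟭 A) ⥤ Comma π (𝟭 B) where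
  obj x :=
    { left := φ.obj x.left
      right := α.obj x.right
      hom := eqToHom (Functor.congr_obj heq x.left) ≫ α.map x.hom }
  map {x y} m :=
    { left := φ.map m.left
      right := α.map m.right
      w := by
        have h := Functor.congr_hom heq m.left
        simp only [Functor.comp_map] at h
        dsimp
        rw [h]
        simp only [Category.assoc, eqToHom_trans_assoc, eqToHom_refl, Category.id_comp]
        rw [← α.map_comp, ← α.map_comp]
        have hw := m.w
        simp only [Functor.id_map] at hw
        rw [hw] }
  map_id x := by apply CommaMorphism.ext <;> simp
  map_comp m m' := by apply CommaMorphism.ext <;> simp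

end Defs

/-!
For any adjunction `χ ⊣ k_π`, a morphism `f` is strongly cocartesian iff `k_π` is bijective on
morphisms out of `f`, iff the counit at `f` is invertible. When the unit of `χ_ξ ⊣ k_ξ` is
invertible, the mate at `x` is invertible iff the counit of `χ_π ⊣ k_π` is invertible at
`φ (χ_ξ x)`, i.e. iff `φ (χ_ξ x)` is strongly cocartesian; and every strongly cocartesian morphism
of `F` is isomorphic, through the counit, to some `χ_ξ x`.
-/

theorem CategoryTheory.Adjunction.isIso_counit_app_iff_bijective_map
    {C : Type u₁} {D : Type u₂} [Category.{v₁} C] [Category.{v₂} D] {L : C ⥤ D} {R : D ⥤ C}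
    (adj : L ⊣ R) (X : D) :
    IsIso (adj.counit.app X) ↔
      ∀ Y : D, Function.Bijective (R.map : (X ⟶ Y) → (R.obj X ⟶ R.obj Y)) := by
  rw [isIso_iff_coyoneda_map_bijective]
  refine forall_congr' fun Y => ?_
  refine Iff.trans ?_ (Equiv.comp_bijective R.map (adj.homEquiv (R.obj X) Y).symm)
  congr! 1
  funext u
  simp [Adjunction.homEquiv_counit]

section StronglyCocartesian

variable {E : Type u₁} {B : Type u₂} [Category.{v₁} E] [Category.{v₂} B] {π : E ⥤ B}

theorem StronglyCocartesian.kFunctor_map_bijective {f : Arrow E}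
    (hf : StronglyCocartesian π f.hom) (g : Arrow E) :
    Function.Bijective ((kFunctor π).map : (f ⟶ g) → _) := by
  constructor
  · intro u u' huu
    obtain ⟨hl, hr⟩ : u.left = u'.left ∧ π.map u.right = π.map u'.right :=
      CommaMorphism.ext_iff.1 huu
    obtain ⟨t, -, ht⟩ := hf (f.hom ≫ u.right) (π.map u.right) (π.map_comp _ _)
    have hu : u.right = t := ht u.right ⟨rfl, rfl⟩
    have hu' : u'.right = t := ht u'.right ⟨hr.symm, by rw [← Arrow.w u', ← Arrow.w u, hl]⟩
    exact Arrow.hom_ext _ _ hl (hu.trans hu'.symm)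
  · intro c
    obtain ⟨t, ⟨hπt, hft⟩, -⟩ := hf (c.left ≫ g.hom) c.right ((π.map_comp _ _).trans c.w)
    exact ⟨Arrow.homMk c.left t hft.symm, Comma.hom_ext _ _ rfl hπt⟩

theorem stronglyCocartesian_of_kFunctor_map_bijective {f : Arrow E}
    (hf : ∀ e : E, Function.Bijective ((kFunctor π).map : (f ⟶ Arrow.mk (𝟙 e)) → _)) :
    StronglyCocartesian π f.hom := by
  intro e h v hv
  obtain ⟨u, hu⟩ := (hf e).2 ⟨h, v, show π.map h ≫ π.map (𝟙 e) = π.map f.hom ≫ v by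
    rw [π.map_id, Category.comp_id, hv]⟩
  have hl : u.left = h := congrArg CommaMorphism.left hu
  have hr : π.map u.right = v := congrArg CommaMorphism.right hu
  refine ⟨u.right, ⟨hr, by simpa [hl] using (Arrow.w u).symm⟩, ?_⟩
  rintro t ⟨hπt, hft⟩
  have : Arrow.homMk h t (by simpa using hft.symm) = u :=
    (hf e).1 (hu ▸ Comma.hom_ext _ _ rfl hπt)
  exact congrArg CommaMorphism.right this

theorem stronglyCocartesian_iff_kFunctor_map_bijective (f : Arrow E) :
    StronglyCocartesian π f.hom ↔
      ∀ g : Arrow E, Function.Bijective ((kFunctor π).map : (f ⟶ g) → _) :=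
  ⟨fun hf => hf.kFunctor_map_bijective,
    fun hf => stronglyCocartesian_of_kFunctor_map_bijective fun _ => hf _⟩

theorem stronglyCocartesian_iff_isIso_counit_app {χ : Comma π (𝟭 B) ⥤ Arrow E}
    (adj : χ ⊣ kFunctor π) (f : Arrow E) :
    StronglyCocartesian π f.hom ↔ IsIso (adj.counit.app f) := by
  rw [stronglyCocartesian_iff_kFunctor_map_bijective, adj.isIso_counit_app_iff_bijective_map]

theorem stronglyCocartesian_obj_hom_of_isIso_unit {χ : Comma π (𝟭 B) ⥤ Arrow E}
    (adj : χ ⊣ kFunctor π) [IsIso adj.unit] (x : Comma π (𝟭 B)) :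
    StronglyCocartesian π (χ.obj x).hom :=
  (stronglyCocartesian_iff_isIso_counit_app adj _).2
    (isIso_of_hom_comp_eq_id _ (adj.left_triangle_components x))

end StronglyCocartesian

theorem cocartesianFunctor_iff_chevalley_mate_isIso_general
    {F : Type u₁} {A : Type u₂} {E : Type u₃} {B : Type u₄}
    [Category.{v₁} F] [Category.{v₂} A] [Category.{v₃} E] [Category.{v₄} B]
    (ξ : F ⥤ A) (π : E ⥤ B) (α : A ⥤ B) (φ : F ⥤ E)
    (heq : φ ⋙ π = ξ ⋙ α)
    (χξ : Comma ξ (𝟭 A) ⥤ Arrow F) (adjξ : χξ ⊣ kFunctor ξ) (hξ : IsIso adjξ.unit)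
    (χπ : Comma π (𝟭 B) ⥤ Arrow E) (adjπ : χπ ⊣ kFunctor π)
    (hsq : φ.mapArrow ⋙ kFunctor π = kFunctor ξ ⋙ commaMapFunctor ξ π α φ heq) :
    CocartesianFunctor ξ π φ ↔
      ∀ x : Comma ξ (𝟭 A),
        IsIso
          (χπ.map ((commaMapFunctor ξ π α φ heq).map (adjξ.unit.app x) ≫
              eqToHom (Functor.congr_obj hsq (χξ.obj x)).symm) ≫
            adjπ.counit.app (φ.mapArrow.obj (χξ.obj x))) := by
  have := hξ
  simp only [isIso_comp_left_iff, ← stronglyCocartesian_iff_isIso_counit_app adjπ]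
  constructor
  · exact fun hφ x => hφ _ (stronglyCocartesian_obj_hom_of_isIso_unit adjξ x)
  · intro hφ e e' m hm
    have : IsIso (adjξ.counit.app (Arrow.mk m)) :=
      (stronglyCocartesian_iff_isIso_counit_app adjξ _).1 hm
    change StronglyCocartesian π (φ.mapArrow.obj (Arrow.mk m)).hom
    rw [stronglyCocartesian_iff_isIso_counit_app adjπ]
    refine (NatTrans.isIso_app_iff_of_iso adjπ.counit
      (φ.mapArrow.mapIso (asIso (adjξ.counit.app (Arrow.mk m))))).1 ?_
    rw [← stronglyCocartesian_iff_isIso_counit_app adjπ]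
    exact hφ _

/-- **Chevalley criterion for cocartesian functors.** Let `ξ : F ⥤ A` and `π : E ⥤ B`
be cloven Grothendieck opfibrations, `(α, φ)` a fibered functor with `φ ⋙ π = ξ ⋙ α`,
and `χ_ξ ⊣ k_ξ`, `χ_π ⊣ k_π` left-adjoint-right-inverse adjunctions as in the Chevalley
criterion. Then `(α, φ)` is a cocartesian functor iff the mate of the commutative square
`Arrow(φ) ⋙ k_π = k_ξ ⋙ Φ` is a natural isomorphism, i.e. iff each of its components —
obtained by transposing via the unit of `χ_ξ ⊣ k_ξ` and the counit of `χ_π ⊣ k_π` —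
is an isomorphism. -/
theorem cocartesianFunctor_iff_chevalley_mate_isIso
    {F : Type u₁} {A : Type u₂} {E : Type u₃} {B : Type u₄}
    [Category.{v₁} F] [Category.{v₂} A] [Category.{v₃} E] [Category.{v₄} B]
    (ξ : F ⥤ A) (π : E ⥤ B) (α : A ⥤ B) (φ : F ⥤ E)
    (cξ : Cleavage ξ) (cπ : Cleavage π)
    (heq : φ ⋙ π = ξ ⋙ α)
    (χξ : Comma ξ (𝟭 A) ⥤ Arrow F) (adjξ : χξ ⊣ kFunctor ξ) (hξ : IsIso adjξ.unit)
    (χπ : Comma π (𝟭 B) ⥤ Arrow E) (adjπ : χπ ⊣ kFunctor π) (hπ : IsIso adjπ.unit)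
    (hsq : φ.mapArrow ⋙ kFunctor π = kFunctor ξ ⋙ commaMapFunctor ξ π α φ heq) :
    CocartesianFunctor ξ π φ ↔
      ∀ x : Comma ξ (𝟭 A),
        IsIso
          (χπ.map ((commaMapFunctor ξ π α φ heq).map (adjξ.unit.app x) ≫
              eqToHom (Functor.congr_obj hsq (χξ.obj x)).symm) ≫
            adjπ.counit.app (φ.mapArrow.obj (χξ.obj x))) :=
  cocartesianFunctor_iff_chevalley_mate_isIso_general ξ π α φ heq χξ adjξ hξ χπ adjπ hsq
end

section
/- Let ξ : F ⥤ A and π : E ⥤ B be cloven Grothendieck opfibrations, and let α : A ⥤ B, φ : F ⥤ E be functors with φ ⋙ π = ξ ⋙ α. Let τ_ξ ⊣ ι_ξ and τ_π ⊣ ι_π be fibered adjunctions as in the cocartesian-transport criterion (ι_ξ : F ⥤ Comma ξ (𝟭 A) sending e to (e, ξ.obj e, 𝟙), τ_ξ its fibered left adjoint, and similarly for π). Let Φ : Comma ξ (𝟭 A) ⥤ Comma π (𝟭 B) be the functor induced by (φ, α), which satisfies ι_ξ ⋙ Φ = φ ⋙ ι_π. Then (α, φ) is a cocartesian functor (φ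 maps strongly cocartesian morphisms to strongly cocartesian morphisms) if and only if the mate of this commutative square — the natural transformation with component at x : Comma ξ (𝟭 A) given by transposing, from τ_π.obj (Φ.obj x) to φ.obj (τ_ξ.obj x), constructed from the unit of τ_ξ ⊣ ι_ξ and the counit of τ_π ⊣ ι_π — is a natural isomorphism. -/
/-!
The mate at `x` is the transpose, under `τ_π ⊣ ι_π`, of `Φ(η_x) : Φ x ⟶ ι_π (φ (τ_ξ x))`, a
morphism whose base component is invertible. The top component of every unit of a fibered
transport adjunction is strongly cocartesian; hence such a transpose is invertible exactly when
the top component `φ(η_x.left)` of `Φ(η_x)` is strongly cocartesian. On the other hand every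
strongly cocartesian morphism of `F` is, up to an isomorphism, a unit component `η_x.left`, so
`φ` preserves strongly cocartesian morphisms iff it sends every `η_x.left` to one.
-/

open CategoryTheory

universe v₁ v₂ v₃ v₄ u₁ u₂ u₃ u₄

section Defs

variable {E : Type u₁} {B : Type u₂} [Category.{v₁} E] [Category.{v₂} B]

/-- The inclusion `ι : E ⥤ Comma π (𝟭 B)` sending `e` to `(e, π.obj e, 𝟙 (π.obj e))`
and `h : e ⟶ e'` to `(h, π.map h)`. -/
@[simps]
def iotaFunctor (π : E ⥤ B) : E ⥤ Comma π (𝟭 B) where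
  obj e := { left := e, right := π.obj e, hom := 𝟙 (π.obj e) }
  map {e e'} h :=
    { left := h
      right := π.map h
      w := by simp }

variable {F : Type u₃} {A : Type u₄} [Category.{v₃} F] [Category.{v₄} A]

end Defs

namespace StronglyCocartesian

variable {E : Type u₁} {B : Type u₂} [Category.{v₁} E] [Category.{v₂} B] {π : E ⥤ B}
  {e e₁ e₂ : E} {f : e ⟶ e₁}

lemma comp_isIso_s10 (hf : StronglyCocartesian π f) (k : e₁ ⟶ e₂) [IsIso k] :
    StronglyCocartesian π (f ≫ k) := by
  intro e'' h v hv
  rw [π.map_comp, Category.assoc] at hv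
  obtain ⟨g, ⟨hg_map, hg_comp⟩, hg_uniq⟩ := hf h (π.map k ≫ v) hv
  refine ⟨inv k ≫ g, ⟨by simp [hg_map], by simpa using hg_comp⟩, ?_⟩
  rintro g' ⟨hg'_map, hg'_comp⟩
  rw [← hg_uniq (k ≫ g') ⟨by rw [π.map_comp, hg'_map], by rwa [← Category.assoc]⟩,
    IsIso.inv_hom_id_assoc]

lemma isIso_of_comp (hf : StronglyCocartesian π f) {k : e₁ ⟶ e₂}
    (hfk : StronglyCocartesian π (f ≫ k)) [IsIso (π.map k)] : IsIso k := by
  obtain ⟨k', ⟨hk'_map, hk'_comp⟩, -⟩ := hfk f (inv (π.map k)) (by simp)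
  refine ⟨k', ?_, ?_⟩
  · obtain ⟨_, _, huniq⟩ := hf f (𝟙 _) (by simp)
    rw [huniq (k ≫ k') ⟨by simp [hk'_map], by rwa [← Category.assoc]⟩,
      huniq (𝟙 _) ⟨by simp, by simp⟩]
  · obtain ⟨_, _, huniq⟩ := hfk (f ≫ k) (𝟙 _) (by simp)
    rw [huniq (k' ≫ k) ⟨by simp [hk'_map], by rw [← Category.assoc, hk'_comp]⟩,
      huniq (𝟙 _) ⟨by simp, by simp⟩]

lemma exists_isIso_comp_eq (hf : StronglyCocartesian π f) {m : e ⟶ e₂}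
    (hm : StronglyCocartesian π m) (w : π.obj e₁ ⟶ π.obj e₂) [IsIso w]
    (hw : π.map m = π.map f ≫ w) : ∃ k : e₁ ⟶ e₂, IsIso k ∧ f ≫ k = m := by
  obtain ⟨k, ⟨hk_map, hk_comp⟩, -⟩ := hf m w hw
  have : IsIso (π.map k) := hk_map ▸ inferInstance
  exact ⟨k, hf.isIso_of_comp (hk_comp ▸ hm), hk_comp⟩

end StronglyCocartesian

namespace CategoryTheory.Adjunction

variable {E : Type u₁} {B : Type u₂} [Category.{v₁} E] [Category.{v₂} B] {π : E ⥤ B}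
  {τ : Comma π (𝟭 B) ⥤ E} (adj : τ ⊣ iotaFunctor π)

lemma unit_left_comp_homEquiv_symm {y : Comma π (𝟭 B)} {e : E}
    (g : y ⟶ (iotaFunctor π).obj e) :
    (adj.unit.app y).left ≫ (adj.homEquiv y e).symm g = g.left := by
  have := (adj.homEquiv_unit y e _).symm.trans ((adj.homEquiv y e).apply_symm_apply g)
  exact congrArg CommaMorphism.left this

variable (hfib : τ ⋙ π = Comma.snd π (𝟭 B))
  (hunit : ∀ x : Comma π (𝟭 B),
    (adj.unit.app x).right = eqToHom (Functor.congr_obj hfib x).symm)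
include hunit

lemma map_homEquiv_symm {y : Comma π (𝟭 B)} {e : E} (g : y ⟶ (iotaFunctor π).obj e) :
    π.map ((adj.homEquiv y e).symm g) = eqToHom (Functor.congr_obj hfib y) ≫ g.right := by
  have := (adj.homEquiv_unit y e _).symm.trans ((adj.homEquiv y e).apply_symm_apply g)
  have := congrArg CommaMorphism.right this
  simp only [Comma.comp_right, iotaFunctor_map_right, hunit] at this
  exact (eqToHom_comp_iff _ _ _).1 this

lemma map_unit_left (x : Comma π (𝟭 B)) :
    π.map (adj.unit.app x).left = x.hom ≫ eqToHom (Functor.congr_obj hfib x).symm := by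
  have := (adj.unit.app x).w
  rw [hunit x] at this
  exact (Category.comp_id _).symm.trans this

lemma unit_left_stronglyCocartesian (x : Comma π (𝟭 B)) :
    StronglyCocartesian π (e' := τ.obj x) (adj.unit.app x).left := by
  intro e h v hv
  change x.left ⟶ e at h
  change π.obj (τ.obj x) ⟶ π.obj e at v
  show ∃! g' : τ.obj x ⟶ e, π.map g' = v ∧ (adj.unit.app x).left ≫ g' = h
  let g : x ⟶ (iotaFunctor π).obj e :=
    { left := h
      right := eqToHom (Functor.congr_obj hfib x).symm ≫ v
      w := by
        change π.map h ≫ 𝟙 _ = _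
        rw [Category.comp_id, hv]
        erw [adj.map_unit_left hfib hunit]
        exact Category.assoc _ _ _ }
  refine ⟨(adj.homEquiv x e).symm g, ⟨?_, adj.unit_left_comp_homEquiv_symm g⟩, ?_⟩
  · rw [adj.map_homEquiv_symm hfib hunit]
    exact (eqToHom_comp_iff _ _ _).2 rfl
  rintro g' ⟨hg'_map, hg'_comp⟩
  rw [Equiv.eq_symm_apply, homEquiv_unit]
  ext
  · exact hg'_comp
  · simp [hunit, hg'_map, g]
    rfl

lemma isIso_homEquiv_symm_iff {y : Comma π (𝟭 B)} {e : E} (g : y ⟶ (iotaFunctor π).obj e)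
    [IsIso g.right] :
    IsIso ((adj.homEquiv y e).symm g) ↔ StronglyCocartesian π g.left := by
  have hunit_left : StronglyCocartesian π (e' := τ.obj y) (adj.unit.app y).left :=
    adj.unit_left_stronglyCocartesian hfib hunit y
  rw [← adj.unit_left_comp_homEquiv_symm g]
  constructor
  · intro
    exact hunit_left.comp_isIso_s10 ((adj.homEquiv y e).symm g)
  · intro h
    have : IsIso (π.map ((adj.homEquiv y e).symm g)) := by
      rw [adj.map_homEquiv_symm hfib hunit]
      exact IsIso.comp_isIso' inferInstance ‹IsIso g.right›
    exact hunit_left.isIso_of_comp h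

lemma exists_isIso_unit_left_comp_eq {e e' : E} {m : e ⟶ e'} (hm : StronglyCocartesian π m) :
    ∃ k, IsIso k ∧ (adj.unit.app ⟨e, π.obj e', π.map m⟩).left ≫ k = m :=
  StronglyCocartesian.exists_isIso_comp_eq (adj.unit_left_stronglyCocartesian hfib hunit _) hm
    (eqToHom (Functor.congr_obj hfib _)) (by erw [adj.map_unit_left hfib hunit]; simp)

end CategoryTheory.Adjunction

lemma cocartesianFunctor_iff_forall_unit_left {F : Type u₃} {A : Type u₄} {E : Type u₁}
    {B : Type u₂} [Category.{v₃} F] [Category.{v₄} A] [Category.{v₁} E] [Category.{v₂} B]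
    {ξ : F ⥤ A} (π : E ⥤ B) (φ : F ⥤ E) {τ : Comma ξ (𝟭 A) ⥤ F} (adj : τ ⊣ iotaFunctor ξ)
    (hfib : τ ⋙ ξ = Comma.snd ξ (𝟭 A))
    (hunit : ∀ x : Comma ξ (𝟭 A),
      (adj.unit.app x).right = eqToHom (Functor.congr_obj hfib x).symm) :
    CocartesianFunctor ξ π φ ↔
      ∀ x : Comma ξ (𝟭 A), StronglyCocartesian π (φ.map (adj.unit.app x).left) := by
  refine ⟨fun h x => h _ (adj.unit_left_stronglyCocartesian hfib hunit x), fun h e e' m hm => ?_⟩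
  obtain ⟨k, hk, hkm⟩ := adj.exists_isIso_unit_left_comp_eq hfib hunit hm
  rw [← hkm, φ.map_comp]
  exact StronglyCocartesian.comp_isIso_s10 (h _) (φ.map k)

theorem cocartesianFunctor_iff_transport_mate_isIso_general
    {F : Type u₁} {A : Type u₂} {E : Type u₃} {B : Type u₄}
    [Category.{v₁} F] [Category.{v₂} A] [Category.{v₃} E] [Category.{v₄} B]
    (ξ : F ⥤ A) (π : E ⥤ B) (α : A ⥤ B) (φ : F ⥤ E)
    (heq : φ ⋙ π = ξ ⋙ α)
    (τξ : Comma ξ (𝟭 A) ⥤ F) (hfibξ : τξ ⋙ ξ = Comma.snd ξ (𝟭 A))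
    (adjξ : τξ ⊣ iotaFunctor ξ)
    (hunitξ : ∀ x : Comma ξ (𝟭 A),
      (adjξ.unit.app x).right = eqToHom (Functor.congr_obj hfibξ x).symm)
    (τπ : Comma π (𝟭 B) ⥤ E) (hfibπ : τπ ⋙ π = Comma.snd π (𝟭 B))
    (adjπ : τπ ⊣ iotaFunctor π)
    (hunitπ : ∀ x : Comma π (𝟭 B),
      (adjπ.unit.app x).right = eqToHom (Functor.congr_obj hfibπ x).symm)
    (hsq : iotaFunctor ξ ⋙ commaMapFunctor ξ π α φ heq = φ ⋙ iotaFunctor π) :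
    CocartesianFunctor ξ π φ ↔
      ∀ x : Comma ξ (𝟭 A),
        IsIso
          (τπ.map ((commaMapFunctor ξ π α φ heq).map (adjξ.unit.app x) ≫
              eqToHom (Functor.congr_obj hsq (τξ.obj x))) ≫
            adjπ.counit.app (φ.obj (τξ.obj x))) := by
  rw [cocartesianFunctor_iff_forall_unit_left π φ adjξ hfibξ hunitξ]
  refine forall_congr' fun x => ?_
  let g := (commaMapFunctor ξ π α φ heq).map (adjξ.unit.app x) ≫
    eqToHom (Functor.congr_obj hsq (τξ.obj x))
  have hg_left : g.left = φ.map (adjξ.unit.app x).left := by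
    simp only [g, Comma.comp_left, commaMapFunctor_map_left, Comma.eqToHom_left]
    exact Category.comp_id _
  have : IsIso (adjξ.unit.app x).right := by
    rw [hunitξ]
    exact instIsIsoEqToHom _
  have : IsIso g.right := IsIso.comp_isIso' (α.map_isIso _) (by
    rw [Comma.eqToHom_right]
    exact instIsIsoEqToHom _)
  have hmate := adjπ.isIso_homEquiv_symm_iff hfibπ hunitπ g
  rw [Adjunction.homEquiv_counit, hg_left] at hmate
  exact hmate.symm

/-- **Characterization of cocartesian functors via the fibered mate of the
transport adjunctions.** Let `ξ : F ⥤ A` and `π : E ⥤ B` be cloven Grothendieck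
opfibrations, `(α, φ)` a fibered functor with `φ ⋙ π = ξ ⋙ α`, and `τ_ξ ⊣ ι_ξ`,
`τ_π ⊣ ι_π` fibered adjunctions as in the cocartesian-transport criterion. Then
`(α, φ)` is a cocartesian functor iff the mate of the commutative square
`ι_ξ ⋙ Φ = φ ⋙ ι_π` is a natural isomorphism, i.e. iff each of its components —
obtained by transposing via the unit of `τ_ξ ⊣ ι_ξ` and the counit of `τ_π ⊣ ι_π` —
is an isomorphism. -/
theorem cocartesianFunctor_iff_transport_mate_isIso
    {F : Type u₁} {A : Type u₂} {E : Type u₃} {B : Type u₄}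
    [Category.{v₁} F] [Category.{v₂} A] [Category.{v₃} E] [Category.{v₄} B]
    (ξ : F ⥤ A) (π : E ⥤ B) (α : A ⥤ B) (φ : F ⥤ E)
    (cξ : Cleavage ξ) (cπ : Cleavage π)
    (heq : φ ⋙ π = ξ ⋙ α)
    (τξ : Comma ξ (𝟭 A) ⥤ F) (hfibξ : τξ ⋙ ξ = Comma.snd ξ (𝟭 A))
    (adjξ : τξ ⊣ iotaFunctor ξ)
    (hunitξ : ∀ x : Comma ξ (𝟭 A),
      (adjξ.unit.app x).right = eqToHom (Functor.congr_obj hfibξ x).symm)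
    (τπ : Comma π (𝟭 B) ⥤ E) (hfibπ : τπ ⋙ π = Comma.snd π (𝟭 B))
    (adjπ : τπ ⊣ iotaFunctor π)
    (hunitπ : ∀ x : Comma π (𝟭 B),
      (adjπ.unit.app x).right = eqToHom (Functor.congr_obj hfibπ x).symm)
    (hsq : iotaFunctor ξ ⋙ commaMapFunctor ξ π α φ heq = φ ⋙ iotaFunctor π) :
    CocartesianFunctor ξ π φ ↔
      ∀ x : Comma ξ (𝟭 A),
        IsIso
          (τπ.map ((commaMapFunctor ξ π α φ heq).map (adjξ.unit.app x) ≫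
              eqToHom (Functor.congr_obj hsq (τξ.obj x))) ≫
            adjπ.counit.app (φ.obj (τξ.obj x))) :=
  cocartesianFunctor_iff_transport_mate_isIso_general ξ π α φ heq τξ hfibξ adjξ hunitξ τπ hfibπ adjπ
    hunitπ hsq
end
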